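/- For every d ≥ 5 (d odd or even), the boundary complex ∂(D_1 ∪ D_2) contains the 2-skeleton of ∂C_{d+1}^*: every subset of V_{d+1} of cardinality at most 3 containing no antipodal pair {x_k, y_k} is a face of ∂(D_1 ∪ D_2). -/
import Mathlib


namespace SpherePaper

/-- Vertices of `∂C_{d+1}^*`: `(i, false)` plays the role of `x_i` and `(i, true)` of `y_i`
for `i ∈ {1,…,d+1}`, where the index `d+1` is the residue `0` in `ZMod (d+1)`. -/
abbrev VtxA (d : ℕ) := ZMod (d + 1) × Bool

/-- The facet `τ_j^k` of `∂C_d^*`, viewed inside `∂C_{d+1}^*`; the indices of its vertices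
are read cyclically mod `d` inside `{1, …, d}`. -/
def tauA (d j k : ℕ) : Finset (VtxA d) :=
  (Finset.range d).image fun t =>
    ((((k + t - 1) % d + 1 : ℕ) : ZMod (d + 1)), decide (t < j))

/-- The complex `Γ_j` (inside `∂C_{d+1}^*`) generated by `τ_j^k`, `1 ≤ k ≤ d`. -/
def GammaA (d j : ℕ) : Set (Finset (VtxA d)) :=
  {F | ∃ k, 1 ≤ k ∧ k ≤ d ∧ F ⊆ tauA d j k}

/-- `F` is a facet (an inclusion-maximal face) of the complex `C`. -/
def IsFacetOf {α : Type*} (C : Set (Finset α)) (F : Finset α) : Prop :=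
  F ∈ C ∧ ∀ G ∈ C, F ⊆ G → F = G

/-- The cone `C * {w} = {F ∪ s : F ∈ C, s ⊆ {w}}`. -/
def coneC {α : Type*} [DecidableEq α] (C : Set (Finset α)) (w : α) : Set (Finset α) :=
  {H | ∃ G ∈ C, ∃ s : Finset α, s ⊆ {w} ∧ H = G ∪ s}

/-- The ball `B_1` of Definition 3.5: for odd `d = 2m+1` it is `⋃_{k=0}^{m+1} Γ_k`; for even
`d = 2m` it is `(⋃_{k=0}^{m} Γ_k) ∪ (-γ)`, with `-γ` generated by `τ_{m+1}^k`, `m ≤ k ≤ d-1`. -/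
def B1A (d : ℕ) : Set (Finset (VtxA d)) :=
  if d % 2 = 1 then {F | ∃ k ≤ d / 2 + 1, F ∈ GammaA d k}
  else
    {F | ∃ k ≤ d / 2, F ∈ GammaA d k} ∪
      {F | ∃ k, d / 2 ≤ k ∧ k ≤ d - 1 ∧ F ⊆ tauA d (d / 2 + 1) k}

/-- The ball `B_2` of Definition 3.5: for odd `d = 2m+1` it is `⋃_{k=m}^{d} Γ_k`; for even
`d = 2m` it is `(⋃_{k=m}^{d} Γ_k) ∪ γ`, with `γ` generated by `τ_{m-1}^k`, `1 ≤ k ≤ m`. -/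
def B2A (d : ℕ) : Set (Finset (VtxA d)) :=
  if d % 2 = 1 then {F | ∃ k, d / 2 ≤ k ∧ k ≤ d ∧ F ∈ GammaA d k}
  else
    {F | ∃ k, d / 2 ≤ k ∧ k ≤ d ∧ F ∈ GammaA d k} ∪
      {F | ∃ k, 1 ≤ k ∧ k ≤ d / 2 ∧ F ⊆ tauA d (d / 2 - 1) k}

/-- `D_1 = B_1 * {x_{d+1}}`. -/
def D1A (d : ℕ) : Set (Finset (VtxA d)) :=
  coneC (B1A d) (((d + 1 : ℕ) : ZMod (d + 1)), false)

/-- `D_2 = B_2 * {y_{d+1}}`. -/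
def D2A (d : ℕ) : Set (Finset (VtxA d)) :=
  coneC (B2A d) (((d + 1 : ℕ) : ZMod (d + 1)), true)

/-- The boundary complex of a pure `d`-dimensional complex `K`: the complex generated by the
`d`-element faces of `K` that lie in exactly one facet of `K`. -/
def bdry {α : Type*} (d : ℕ) (K : Set (Finset α)) : Set (Finset α) :=
  {G | ∃ F, F ∈ K ∧ F.card = d ∧ (∃! T, IsFacetOf K T ∧ F ⊆ T) ∧ G ⊆ F}

/-- The boundary complex `∂(D_1 ∪ D_2)`. -/
def BD (d : ℕ) : Set (Finset (VtxA d)) := bdry d (D1A d ∪ D2A d)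


/-! ### Index arithmetic -/

def Tf (d k i : ℕ) : ℕ := (i - 1 + (d - (k - 1) % d)) % d

def If' (d k t : ℕ) : ℕ := (k - 1 + t) % d + 1

variable {d : ℕ}

lemma mod_small {a : ℕ} (h : a < d) : a % d = a := Nat.mod_eq_of_lt h

lemma mod_sub {a : ℕ} (h1 : d ≤ a) (h2 : a < 2*d) : a % d = a - d := by
  rw [Nat.mod_eq_sub_mod h1, Nat.mod_eq_of_lt (by omega)]

lemma mod_lt' (hd0 : 0 < d) (a : ℕ) : a % d < d := Nat.mod_lt _ hd0

lemma If'_ge_one (d k t : ℕ) : 1 ≤ If' d k t := Nat.le_add_left _ _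

lemma If'_le (hd0 : 0 < d) (k t : ℕ) : If' d k t ≤ d := by
  have := mod_lt' hd0 (k - 1 + t); unfold If'; omega

lemma Tf_lt (hd0 : 0 < d) (k i : ℕ) : Tf d k i < d := mod_lt' hd0 _

lemma Tf_If' (hd0 : 0 < d) (k : ℕ) {t : ℕ} (ht : t < d) : Tf d k (If' d k t) = t := by
  unfold Tf If'
  have hB : (k - 1) % d < d := mod_lt' hd0 _
  have h2 : (k - 1 + t) % d + 1 - 1 = (k - 1 + t) % d := by omega
  rw [h2, Nat.add_mod (k-1) t, mod_small ht]
  set B := (k-1) % d with hBdef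
  rcases Nat.lt_or_ge (B + t) d with h | h
  · rw [mod_small h]
    have : B + t + (d - B) = t + d := by omega
    rw [this, Nat.add_mod_right, mod_small ht]
  · rw [mod_sub h (by omega)]
    have : B + t - d + (d - B) = t := by omega
    rw [this, mod_small ht]

lemma Tf_inj (hd0 : 0 < d) (k : ℕ) {i i' : ℕ} (hi : 1 ≤ i) (hi2 : i ≤ d)
    (hi' : 1 ≤ i') (hi2' : i' ≤ d) (h : Tf d k i = Tf d k i') : i = i' := by
  unfold Tf at h
  have h' : i - 1 ≡ i' - 1 [MOD d] := Nat.ModEq.add_right_cancel' _ h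
  unfold Nat.ModEq at h'
  rw [mod_small (by omega), mod_small (by omega)] at h'
  omega

lemma If'_Tf (hd0 : 0 < d) (k : ℕ) {i : ℕ} (hi : 1 ≤ i) (hi2 : i ≤ d) :
    If' d k (Tf d k i) = i := by
  refine Tf_inj hd0 k (If'_ge_one d k _) (If'_le hd0 k _) hi hi2 ?_
  rw [Tf_If' hd0 k (Tf_lt hd0 k i)]

lemma Tf_eq (hk : 1 ≤ k) (hk2 : k ≤ d) {i : ℕ} (hi : 1 ≤ i) :
    Tf d k i = (i + d - k) % d := by
  unfold Tf
  rw [mod_small (show k - 1 < d by omega)]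
  congr 1; omega

lemma Tf_self (hd0 : 0 < d) (hk : 1 ≤ k) (hk2 : k ≤ d) : Tf d k k = 0 := by
  rw [Tf_eq hk hk2 hk]
  have : k + d - k = d := by omega
  rw [this, Nat.mod_self]

/-- rotation formula -/
lemma Tf_If'_rot (hd0 : 0 < d) (k k' : ℕ) {t : ℕ} (ht : t < d) :
    Tf d k' (If' d k t) = (t + (k - 1 + (d - (k' - 1) % d)) % d) % d := by
  unfold Tf If'
  have h2 : (k - 1 + t) % d + 1 - 1 = (k - 1 + t) % d := by omega
  rw [h2, Nat.mod_add_mod]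
  have h3 : k - 1 + t + (d - (k' - 1) % d) = t + (k - 1 + (d - (k' - 1) % d)) := by omega
  rw [h3, Nat.add_mod_mod]


/-! ### casts -/

lemma castInj {a b : ℕ} (ha : a ≤ d) (hb : b ≤ d)
    (h : (a : ZMod (d+1)) = b) : a = b := by
  have := congrArg ZMod.val h
  rwa [ZMod.val_cast_of_lt (by omega), ZMod.val_cast_of_lt (by omega)] at this

lemma cast_ne_zero {i : ℕ} (hi : 1 ≤ i) (hi2 : i ≤ d) : (i : ZMod (d+1)) ≠ 0 := by
  intro h
  have := congrArg ZMod.val h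
  rw [ZMod.val_cast_of_lt (by omega), ZMod.val_zero] at this
  omega

lemma val_cast (z : ZMod (d+1)) : ((z.val : ℕ) : ZMod (d+1)) = z := by
  simp [ZMod.natCast_val, ZMod.cast_id]

/-! ### tauA membership -/

lemma mem_tauA_iff (hd0 : 0 < d) (hk : 1 ≤ k) {i : ℕ} (hi : 1 ≤ i) (hi2 : i ≤ d)
    {b : Bool} {j : ℕ} :
    (((i : ZMod (d+1)), b) ∈ tauA d j k) ↔ b = decide (Tf d k i < j) := by
  unfold tauA
  rw [Finset.mem_image]
  constructor
  · rintro ⟨t, ht, heq⟩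
    rw [Finset.mem_range] at ht
    have hkk : k + t - 1 = k - 1 + t := by omega
    rw [Prod.mk.injEq] at heq
    obtain ⟨h1, h2⟩ := heq
    have hIe : If' d k t = i := by
      refine castInj (by have := If'_le hd0 k t; omega) hi2 ?_
      rw [← h1]; unfold If'; rw [← hkk]
    have : Tf d k i = t := by rw [← hIe, Tf_If' hd0 k ht]
    rw [this, h2]
  · intro hb
    refine ⟨Tf d k i, Finset.mem_range.mpr (Tf_lt hd0 k i), ?_⟩
    have hkk : k + Tf d k i - 1 = k - 1 + Tf d k i := by omega
    rw [Prod.mk.injEq]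
    constructor
    · rw [hkk]
      have : (k - 1 + Tf d k i) % d + 1 = If' d k (Tf d k i) := rfl
      rw [this, If'_Tf hd0 k hi hi2]
    · exact hb.symm

lemma mem_tauA_elim (hd0 : 0 < d) (hk : 1 ≤ k) {j : ℕ} {v : VtxA d}
    (hv : v ∈ tauA d j k) :
    ∃ i, 1 ≤ i ∧ i ≤ d ∧ v = ((i : ZMod (d+1)), decide (Tf d k i < j)) := by
  unfold tauA at hv
  rw [Finset.mem_image] at hv
  obtain ⟨t, ht, heq⟩ := hv
  rw [Finset.mem_range] at ht
  refine ⟨If' d k t, If'_ge_one d k t, If'_le hd0 k t, ?_⟩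
  rw [← heq, Tf_If' hd0 k ht]
  have hkk : k + t - 1 = k - 1 + t := by omega
  unfold If'; rw [hkk]

lemma tau_mem_of (hd0 : 0 < d) (hk : 1 ≤ k) {j i : ℕ} (hi : 1 ≤ i) (hi2 : i ≤ d) :
    ((i : ZMod (d+1)), decide (Tf d k i < j)) ∈ tauA d j k :=
  (mem_tauA_iff hd0 hk hi hi2).mpr rfl

lemma fst_ne_zero_of_mem_tauA (hd0 : 0 < d) (hk : 1 ≤ k) {j : ℕ} {v : VtxA d}
    (hv : v ∈ tauA d j k) : v.1 ≠ 0 := by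
  obtain ⟨i, hi, hi2, rfl⟩ := mem_tauA_elim hd0 hk hv
  exact cast_ne_zero hi hi2

lemma card_tauA (hd0 : 0 < d) (hk : 1 ≤ k) (j : ℕ) : (tauA d j k).card = d := by
  unfold tauA
  rw [Finset.card_image_of_injOn, Finset.card_range]
  intro t ht t' ht' heq
  rw [Finset.mem_coe, Finset.mem_range] at ht ht'
  rw [Prod.mk.injEq] at heq
  have hkk : k + t - 1 = k - 1 + t := by omega
  have hkk' : k + t' - 1 = k - 1 + t' := by omega
  have h1 : (If' d k t : ZMod (d+1)) = (If' d k t' : ℕ) := by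
    unfold If'; rw [← hkk, ← hkk']; exact heq.1
  have h2 : If' d k t = If' d k t' :=
    castInj (If'_le hd0 k t) (If'_le hd0 k t') h1
  have := congrArg (Tf d k) h2
  rwa [Tf_If' hd0 k ht, Tf_If' hd0 k ht'] at this

lemma tau_ext (hd0 : 0 < d) (hk : 1 ≤ k) (hk' : 1 ≤ k') {j j' : ℕ}
    (h : ∀ i, 1 ≤ i → i ≤ d → (Tf d k i < j ↔ Tf d k' i < j')) :
    tauA d j k = tauA d j' k' := by
  ext v
  constructor
  · intro hv
    obtain ⟨i, hi, hi2, rfl⟩ := mem_tauA_elim hd0 hk hv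
    rw [mem_tauA_iff hd0 hk' hi hi2]
    simp only [decide_eq_decide]
    exact h i hi hi2
  · intro hv
    obtain ⟨i, hi, hi2, rfl⟩ := mem_tauA_elim hd0 hk' hv
    rw [mem_tauA_iff hd0 hk hi hi2]
    simp only [decide_eq_decide]
    exact (h i hi hi2).symm


/-! ### Core numeric lemma -/

lemma core (hd5 : 5 ≤ d) {j j' o t₀ : ℕ} (hj : 1 ≤ j) (hj2 : j ≤ d - 1)
    (ho : o < d) (h0 : t₀ ≠ 0) (h1 : t₀ ≠ j - 1) (h2 : t₀ ≠ j) (h3 : t₀ ≠ d - 1)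
    (H : ∀ t, t < d → t ≠ t₀ → (t < j ↔ (t + o) % d < j')) : o = 0 ∧ j' = j := by
  have hoj' : o < j' := by
    have h := H 0 (by omega) (Ne.symm h0)
    rw [Nat.zero_add, mod_small ho] at h
    exact h.mp (by omega)
  have ho0 : o = 0 := by
    by_contra hno
    have h := H (d-1) (by omega) (Ne.symm h3)
    rw [mod_sub (by omega) (by omega)] at h
    have : ¬ (d - 1 < j) := by omega
    have h' := (not_iff_not.mpr h).mp this
    omega
  subst ho0
  have hb := H (j-1) (by omega) (Ne.symm h1)
  rw [Nat.add_zero, mod_small (by omega : j - 1 < d)] at hb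
  have hc := H j (by omega) (Ne.symm h2)
  rw [Nat.add_zero, mod_small (by omega : j < d)] at hc
  have hb' : j - 1 < j' := hb.mp (by omega)
  have hc' : ¬ (j < j') := fun hh => by have := hc.mpr hh; omega
  exact ⟨rfl, by omega⟩

/-- If `τ_j^k` minus one vertex (at relative position `t₀`, neither an end of the
`y`-block nor adjacent to it) is contained in `τ_{j'}^{k'}`, then the latter equals
`τ_j^k`. -/
lemma sigma_unique (hd5 : 5 ≤ d) {j j' k k' t₀ : ℕ} (hk : 1 ≤ k) (hk' : 1 ≤ k')
    (hj : 1 ≤ j) (hj2 : j ≤ d - 1) (ht : t₀ < d)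
    (h0 : t₀ ≠ 0) (h1 : t₀ ≠ j - 1) (h2 : t₀ ≠ j) (h3 : t₀ ≠ d - 1)
    (hsub : (tauA d j k).erase (((If' d k t₀ : ℕ) : ZMod (d+1)), decide (t₀ < j))
      ⊆ tauA d j' k') :
    tauA d j' k' = tauA d j k := by
  have hd0 : 0 < d := by omega
  set o : ℕ := (k - 1 + (d - (k' - 1) % d)) % d with hodef
  have ho : o < d := mod_lt' hd0 _
  have H : ∀ t, t < d → t ≠ t₀ → (t < j ↔ (t + o) % d < j') := by
    intro t htd htne
    have hv : (((If' d k t : ℕ) : ZMod (d+1)), decide (t < j)) ∈ tauA d j k := by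
      have := tau_mem_of hd0 hk (j := j) (If'_ge_one d k t) (If'_le hd0 k t)
      rwa [Tf_If' hd0 k htd] at this
    have hne : (((If' d k t : ℕ) : ZMod (d+1)), decide (t < j)) ≠
        (((If' d k t₀ : ℕ) : ZMod (d+1)), decide (t₀ < j)) := by
      intro heq
      rw [Prod.mk.injEq] at heq
      have := castInj (If'_le hd0 k t) (If'_le hd0 k t₀) heq.1
      have := congrArg (Tf d k) this
      rw [Tf_If' hd0 k htd, Tf_If' hd0 k ht] at this
      exact htne this
    have hv' : (((If' d k t : ℕ) : ZMod (d+1)), decide (t < j)) ∈ tauA d j' k' :=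
      hsub (Finset.mem_erase.mpr ⟨hne, hv⟩)
    rw [mem_tauA_iff hd0 hk' (If'_ge_one d k t) (If'_le hd0 k t)] at hv'
    rw [Tf_If'_rot hd0 k k' htd] at hv'
    rw [decide_eq_decide] at hv'
    exact hv'
  obtain ⟨ho0, hj'⟩ := core hd5 hj hj2 ho h0 h1 h2 h3 H
  refine (tau_ext hd0 hk hk' ?_).symm
  intro i hi hi2
  have hrot := Tf_If'_rot hd0 k k' (Tf_lt hd0 k i)
  rw [If'_Tf hd0 k hi hi2, ← hodef, ho0, Nat.add_zero,
    mod_small (Tf_lt hd0 k i)] at hrot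
  rw [hrot, hj']

/-! ### Generator predicates -/

def G1 (d j k : ℕ) : Prop :=
  1 ≤ k ∧ k ≤ d ∧
    (if d % 2 = 1 then j ≤ d / 2 + 1
     else j ≤ d / 2 ∨ (j = d / 2 + 1 ∧ d / 2 ≤ k ∧ k ≤ d - 1))

def G2 (d j k : ℕ) : Prop :=
  1 ≤ k ∧ k ≤ d ∧
    (if d % 2 = 1 then d / 2 ≤ j ∧ j ≤ d
     else (d / 2 ≤ j ∧ j ≤ d) ∨ (j = d / 2 - 1 ∧ k ≤ d / 2))

lemma mem_B1A_iff (hd5 : 5 ≤ d) {F : Finset (VtxA d)} :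
    F ∈ B1A d ↔ ∃ j k, G1 d j k ∧ F ⊆ tauA d j k := by
  unfold B1A GammaA G1
  by_cases hpar : d % 2 = 1
  · simp only [if_pos hpar, Set.mem_setOf_eq]
    constructor
    · rintro ⟨j, hj, hmem⟩
      obtain ⟨k, hk1, hk2, hsub⟩ := hmem
      exact ⟨j, k, ⟨hk1, hk2, hj⟩, hsub⟩
    · rintro ⟨j, k, ⟨hk1, hk2, hj⟩, hsub⟩
      exact ⟨j, hj, k, hk1, hk2, hsub⟩
  · simp only [if_neg hpar, Set.mem_union, Set.mem_setOf_eq]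
    constructor
    · rintro (⟨j, hj, k, hk1, hk2, hsub⟩ | ⟨k, hk1, hk2, hsub⟩)
      · exact ⟨j, k, ⟨hk1, hk2, Or.inl hj⟩, hsub⟩
      · exact ⟨d/2+1, k, ⟨by omega, by omega, Or.inr ⟨rfl, hk1, hk2⟩⟩, hsub⟩
    · rintro ⟨j, k, ⟨hk1, hk2, hj | ⟨rfl, hx1, hx2⟩⟩, hsub⟩
      · exact Or.inl ⟨j, hj, k, hk1, hk2, hsub⟩
      · exact Or.inr ⟨k, hx1, hx2, hsub⟩

lemma mem_B2A_iff (hd5 : 5 ≤ d) {F : Finset (VtxA d)} :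
    F ∈ B2A d ↔ ∃ j k, G2 d j k ∧ F ⊆ tauA d j k := by
  unfold B2A GammaA G2
  by_cases hpar : d % 2 = 1
  · simp only [if_pos hpar, Set.mem_setOf_eq]
    constructor
    · rintro ⟨j, hj1, hj2, k, hk1, hk2, hsub⟩
      exact ⟨j, k, ⟨hk1, hk2, hj1, hj2⟩, hsub⟩
    · rintro ⟨j, k, ⟨hk1, hk2, hj1, hj2⟩, hsub⟩
      exact ⟨j, hj1, hj2, k, hk1, hk2, hsub⟩
  · simp only [if_neg hpar, Set.mem_union, Set.mem_setOf_eq]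
    constructor
    · rintro (⟨j, hj1, hj2, k, hk1, hk2, hsub⟩ | ⟨k, hk1, hk2, hsub⟩)
      · exact ⟨j, k, ⟨hk1, hk2, Or.inl ⟨hj1, hj2⟩⟩, hsub⟩
      · exact ⟨d/2-1, k, ⟨hk1, by omega, Or.inr ⟨rfl, hk2⟩⟩, hsub⟩
    · rintro ⟨j, k, ⟨hk1, hk2, ⟨hj1, hj2⟩ | ⟨rfl, hx⟩⟩, hsub⟩
      · exact Or.inl ⟨j, hj1, hj2, k, hk1, hk2, hsub⟩
      · exact Or.inr ⟨k, hk1, hx, hsub⟩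

/-! ### Facets of `D1 ∪ D2` -/

def GenCone (d : ℕ) (T : Finset (VtxA d)) : Prop :=
  (∃ j k, G1 d j k ∧ T = tauA d j k ∪ {((0 : ZMod (d+1)), false)}) ∨
  (∃ j k, G2 d j k ∧ T = tauA d j k ∪ {((0 : ZMod (d+1)), true)})

lemma coneVtx_eq : ((d + 1 : ℕ) : ZMod (d + 1)) = 0 := by
  exact_mod_cast ZMod.natCast_self (d+1)

lemma D1A_eq : D1A d = coneC (B1A d) ((0 : ZMod (d+1)), false) := by
  unfold D1A; rw [coneVtx_eq]

lemma D2A_eq : D2A d = coneC (B2A d) ((0 : ZMod (d+1)), true) := by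
  unfold D2A; rw [coneVtx_eq]

lemma mem_cone_iff {C : Set (Finset (VtxA d))} {w : VtxA d} {F : Finset (VtxA d)}
    (hdc : ∀ G H : Finset (VtxA d), G ∈ C → H ⊆ G → H ∈ C) :
    F ∈ coneC C w ↔ ∃ G ∈ C, F ⊆ G ∪ {w} := by
  constructor
  · rintro ⟨G, hG, s, hs, rfl⟩
    exact ⟨G, hG, Finset.union_subset_union (le_refl G) hs⟩
  · rintro ⟨G, hG, hsub⟩
    refine ⟨F.erase w, hdc G _ hG ?_, F ∩ {w}, Finset.inter_subset_right, ?_⟩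
    · intro a ha
      rw [Finset.mem_erase] at ha
      rcases Finset.mem_union.mp (hsub ha.2) with h | h
      · exact h
      · exact absurd (Finset.mem_singleton.mp h) ha.1
    · ext a
      simp only [Finset.mem_union, Finset.mem_erase, Finset.mem_inter,
        Finset.mem_singleton]
      by_cases haw : a = w <;> simp [haw] <;> tauto

lemma B1A_downward (hd5 : 5 ≤ d) {G H : Finset (VtxA d)} (hG : G ∈ B1A d)
    (hH : H ⊆ G) : H ∈ B1A d := by
  rw [mem_B1A_iff hd5] at *
  obtain ⟨j, k, h1, h2⟩ := hG
  exact ⟨j, k, h1, hH.trans h2⟩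

lemma B2A_downward (hd5 : 5 ≤ d) {G H : Finset (VtxA d)} (hG : G ∈ B2A d)
    (hH : H ⊆ G) : H ∈ B2A d := by
  rw [mem_B2A_iff hd5] at *
  obtain ⟨j, k, h1, h2⟩ := hG
  exact ⟨j, k, h1, hH.trans h2⟩

lemma mem_K_iff (hd5 : 5 ≤ d) {F : Finset (VtxA d)} :
    F ∈ D1A d ∪ D2A d ↔ ∃ T, GenCone d T ∧ F ⊆ T := by
  rw [Set.mem_union, D1A_eq, D2A_eq,
    mem_cone_iff (fun G H hG hH => B1A_downward hd5 hG hH),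
    mem_cone_iff (fun G H hG hH => B2A_downward hd5 hG hH)]
  constructor
  · rintro (⟨G, hG, hsub⟩ | ⟨G, hG, hsub⟩)
    · obtain ⟨j, k, h1, h2⟩ := (mem_B1A_iff hd5).mp hG
      exact ⟨tauA d j k ∪ {((0 : ZMod (d+1)), false)}, Or.inl ⟨j, k, h1, rfl⟩,
        hsub.trans (Finset.union_subset_union h2 (le_refl _))⟩
    · obtain ⟨j, k, h1, h2⟩ := (mem_B2A_iff hd5).mp hG
      exact ⟨tauA d j k ∪ {((0 : ZMod (d+1)), true)}, Or.inr ⟨j, k, h1, rfl⟩,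
        hsub.trans (Finset.union_subset_union h2 (le_refl _))⟩
  · rintro ⟨T, (⟨j, k, h1, rfl⟩ | ⟨j, k, h1, rfl⟩), hsub⟩
    · exact Or.inl ⟨tauA d j k, (mem_B1A_iff hd5).mpr ⟨j, k, h1, le_refl _⟩, hsub⟩
    · exact Or.inr ⟨tauA d j k, (mem_B2A_iff hd5).mpr ⟨j, k, h1, le_refl _⟩, hsub⟩

lemma cone_not_mem_tauA (hd0 : 0 < d) (hk : 1 ≤ k) {j : ℕ} {c : Bool} :
    ((0 : ZMod (d+1)), c) ∉ tauA d j k := by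
  intro h
  exact fst_ne_zero_of_mem_tauA hd0 hk h rfl

lemma gencone_card (hd5 : 5 ≤ d) {T : Finset (VtxA d)} (h : GenCone d T) :
    T.card = d + 1 := by
  have hd0 : 0 < d := by omega
  rcases h with ⟨j, k, ⟨hk1, hk2, _⟩, rfl⟩ | ⟨j, k, ⟨hk1, hk2, _⟩, rfl⟩ <;>
  · rw [Finset.union_comm, ← Finset.insert_eq,
      Finset.card_insert_of_notMem (cone_not_mem_tauA hd0 hk1), card_tauA hd0 hk1]

lemma facet_iff (hd5 : 5 ≤ d) {T : Finset (VtxA d)} :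
    IsFacetOf (D1A d ∪ D2A d) T ↔ GenCone d T := by
  constructor
  · rintro ⟨hT, hmax⟩
    obtain ⟨T', hgc, hsub⟩ := (mem_K_iff hd5).mp hT
    have : T = T' := hmax T' ((mem_K_iff hd5).mpr ⟨T', hgc, le_refl _⟩) hsub
    rwa [this]
  · intro hgc
    refine ⟨(mem_K_iff hd5).mpr ⟨T, hgc, le_refl _⟩, ?_⟩
    intro G hG hTG
    obtain ⟨T'', hgc'', hsub''⟩ := (mem_K_iff hd5).mp hG
    have hTT : T = T'' := Finset.eq_of_subset_of_card_le (hTG.trans hsub'')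
      (by rw [gencone_card hd5 hgc, gencone_card hd5 hgc''])
    exact Finset.Subset.antisymm hTG (hTT ▸ hsub'')

/-! ### The reduction -/

def Good (d : ℕ) (F : Finset (VtxA d)) : Prop :=
  ∃ F₀ : Finset (VtxA d), F ⊆ F₀ ∧ F₀.card = d ∧ (∃ T, GenCone d T ∧ F₀ ⊆ T) ∧
    ∀ T T', GenCone d T → F₀ ⊆ T → GenCone d T' → F₀ ⊆ T' → T = T'

lemma good_mem_BD (hd5 : 5 ≤ d) {F : Finset (VtxA d)} (h : Good d F) : F ∈ BD d := by
  obtain ⟨F₀, hFF, hcard, ⟨T, hgc, hsub⟩, huniq⟩ := h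
  refine ⟨F₀, (mem_K_iff hd5).mpr ⟨T, hgc, hsub⟩, hcard, ?_, hFF⟩
  refine ⟨T, ⟨(facet_iff hd5).mpr hgc, hsub⟩, ?_⟩
  rintro T' ⟨hf', hsub'⟩
  exact huniq T' T ((facet_iff hd5).mp hf') hsub' hgc hsub

/-! ### Full facets of the equator are boundary faces (small `j`) -/

lemma tau_subset_tau_eq (hd0 : 0 < d) (hk : 1 ≤ k) (hk' : 1 ≤ k') {j j' : ℕ} {c : Bool}
    (hsub : tauA d j k ⊆ tauA d j' k' ∪ {((0 : ZMod (d+1)), c)}) :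
    tauA d j k = tauA d j' k' := by
  have h1 : tauA d j k ⊆ tauA d j' k' := by
    intro v hv
    rcases Finset.mem_union.mp (hsub hv) with h | h
    · exact h
    · exact absurd (by rw [Finset.mem_singleton.mp h]) (fst_ne_zero_of_mem_tauA hd0 hk hv)
  exact Finset.eq_of_subset_of_card_le h1
    (by rw [card_tauA hd0 hk, card_tauA hd0 hk'])

lemma j_det (hd5 : 5 ≤ d) {j j' k k' : ℕ} (hk : 1 ≤ k) (hk2 : k ≤ d)
    (hk' : 1 ≤ k') (hk2' : k' ≤ d) (hj : j ≤ 1)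
    (heq : tauA d j k = tauA d j' k') : j' = j := by
  have hd0 : 0 < d := by omega
  interval_cases j
  · by_contra hne
    have h1 : Tf d k' k' < j' := by rw [Tf_self hd0 hk' hk2']; omega
    have hv : ((k' : ZMod (d+1)), true) ∈ tauA d j' k' := by
      rw [mem_tauA_iff hd0 hk' hk' hk2']; simp [h1]
    rw [← heq, mem_tauA_iff hd0 hk hk' hk2'] at hv
    simp at hv
  · have hv : ((k : ZMod (d+1)), true) ∈ tauA d 1 k := by
      rw [mem_tauA_iff hd0 hk hk hk2]; simp [Tf_self hd0 hk hk2]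
    rw [heq, mem_tauA_iff hd0 hk' hk hk2] at hv
    have hj1 : 1 ≤ j' := by
      by_contra hh
      simp [show ¬ (Tf d k' k < j') by omega] at hv
    by_contra hne
    have hj2 : 2 ≤ j' := by omega
    have hv1 : ((k' : ZMod (d+1)), true) ∈ tauA d j' k' := by
      rw [mem_tauA_iff hd0 hk' hk' hk2']
      simp [show Tf d k' k' < j' by rw [Tf_self hd0 hk' hk2']; omega]
    have hv2 : (((If' d k' 1 : ℕ) : ZMod (d+1)), true) ∈ tauA d j' k' := by
      rw [mem_tauA_iff hd0 hk' (If'_ge_one d k' 1) (If'_le hd0 k' 1)]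
      simp [show Tf d k' (If' d k' 1) < j' by rw [Tf_If' hd0 k' (by omega)]; omega]
    rw [← heq, mem_tauA_iff hd0 hk hk' hk2'] at hv1
    rw [← heq, mem_tauA_iff hd0 hk (If'_ge_one d k' 1) (If'_le hd0 k' 1)] at hv2
    simp only [true_eq_decide_iff] at hv1 hv2
    have e1 : Tf d k k' = 0 := by omega
    have e2 : Tf d k (If' d k' 1) = 0 := by omega
    have : If' d k' 1 = k' :=
      Tf_inj hd0 k (If'_ge_one d k' 1) (If'_le hd0 k' 1) hk' hk2' (by rw [e1, e2])
    have := congrArg (Tf d k') this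
    rw [Tf_If' hd0 k' (by omega : (1:ℕ) < d), Tf_self hd0 hk' hk2'] at this
    omega

lemma good_of_full (hd5 : 5 ≤ d) {j k : ℕ} (hk : 1 ≤ k) (hk2 : k ≤ d) (hj : j ≤ 1)
    {F : Finset (VtxA d)} (hF : F ⊆ tauA d j k) : Good d F := by
  have hd0 : 0 < d := by omega
  have hG1 : G1 d j k := by
    refine ⟨hk, hk2, ?_⟩
    by_cases hpar : d % 2 = 1
    · rw [if_pos hpar]; omega
    · rw [if_neg hpar]; left; omega
  refine ⟨tauA d j k, hF, card_tauA hd0 hk j,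
    ⟨_, Or.inl ⟨j, k, hG1, rfl⟩, Finset.subset_union_left⟩, ?_⟩
  suffices huniq : ∀ T, GenCone d T → tauA d j k ⊆ T →
      T = tauA d j k ∪ {((0 : ZMod (d+1)), false)} by
    intro T T' h1 h2 h3 h4; rw [huniq T h1 h2, huniq T' h3 h4]
  intro T hgc hsub
  rcases hgc with ⟨j', k', hG, rfl⟩ | ⟨j', k', hG, rfl⟩
  · rw [tau_subset_tau_eq hd0 hk hG.1 hsub]
  · exfalso
    have heq := tau_subset_tau_eq hd0 hk hG.1 hsub
    have hj' := j_det hd5 hk hk2 hG.1 hG.2.1 hj heq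
    obtain ⟨_, _, hcond⟩ := hG
    by_cases hpar : d % 2 = 1
    · rw [if_pos hpar] at hcond; omega
    · rw [if_neg hpar] at hcond; omega

/-! ### Punctured facets with a cone vertex -/

def sigmaF (d j k t₀ : ℕ) (c : Bool) : Finset (VtxA d) :=
  (tauA d j k).erase (((If' d k t₀ : ℕ) : ZMod (d+1)), decide (t₀ < j)) ∪
    {((0 : ZMod (d+1)), c)}

lemma cone_mem_sigmaF {j k t₀ : ℕ} {c : Bool} :
    ((0 : ZMod (d+1)), c) ∈ sigmaF d j k t₀ c :=
  Finset.mem_union_right _ (Finset.mem_singleton_self _)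

lemma mem_sigmaF_of (hd0 : 0 < d) (hk : 1 ≤ k) {j t₀ i : ℕ} {c : Bool}
    (hi : 1 ≤ i) (hi2 : i ≤ d) (ht : t₀ < d) (hne : Tf d k i ≠ t₀) :
    ((i : ZMod (d+1)), decide (Tf d k i < j)) ∈ sigmaF d j k t₀ c := by
  refine Finset.mem_union_left _ (Finset.mem_erase.mpr ⟨?_, tau_mem_of hd0 hk hi hi2⟩)
  intro heq
  rw [Prod.mk.injEq] at heq
  have h := castInj hi2 (If'_le hd0 k t₀) heq.1
  apply hne
  rw [h, Tf_If' hd0 k ht]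

lemma good_of_sigma (hd5 : 5 ≤ d) {j k t₀ : ℕ} {c : Bool} (hk : 1 ≤ k) (hk2 : k ≤ d)
    (hj : 1 ≤ j) (hj2 : j ≤ d - 1) (ht : t₀ < d)
    (h0 : t₀ ≠ 0) (h1 : t₀ ≠ j - 1) (h2 : t₀ ≠ j) (h3 : t₀ ≠ d - 1)
    (hG : GenCone d (tauA d j k ∪ {((0 : ZMod (d+1)), c)}))
    {F : Finset (VtxA d)} (hF : F ⊆ sigmaF d j k t₀ c) : Good d F := by
  have hd0 : 0 < d := by omega
  have hvmem : (((If' d k t₀ : ℕ) : ZMod (d+1)), decide (t₀ < j)) ∈ tauA d j k := by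
    have := tau_mem_of hd0 hk (j := j) (If'_ge_one d k t₀) (If'_le hd0 k t₀)
    rwa [Tf_If' hd0 k ht] at this
  have hcone_notmem : ((0 : ZMod (d+1)), c) ∉
      (tauA d j k).erase (((If' d k t₀ : ℕ) : ZMod (d+1)), decide (t₀ < j)) := by
    intro h
    exact cone_not_mem_tauA hd0 hk (Finset.mem_of_mem_erase h)
  have hcard : (sigmaF d j k t₀ c).card = d := by
    unfold sigmaF
    rw [Finset.union_comm, ← Finset.insert_eq,
      Finset.card_insert_of_notMem hcone_notmem,
      Finset.card_erase_of_mem hvmem, card_tauA hd0 hk]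
    omega
  refine ⟨sigmaF d j k t₀ c, hF, hcard,
    ⟨_, hG, Finset.union_subset_union (Finset.erase_subset _ _) (le_refl _)⟩, ?_⟩
  suffices huniq : ∀ T, GenCone d T → sigmaF d j k t₀ c ⊆ T →
      T = tauA d j k ∪ {((0 : ZMod (d+1)), c)} by
    intro T T' ha hb hc hd'; rw [huniq T ha hb, huniq T' hc hd']
  have key : ∀ (j' k' : ℕ) (c' : Bool), 1 ≤ k' →
      sigmaF d j k t₀ c ⊆ tauA d j' k' ∪ {((0 : ZMod (d+1)), c')} →
      tauA d j' k' = tauA d j k ∧ c' = c := by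
    intro j' k' c' hk' hsub
    have hcc : c' = c := by
      have := hsub cone_mem_sigmaF
      rcases Finset.mem_union.mp this with h | h
      · exact absurd h (cone_not_mem_tauA hd0 hk')
      · rw [Finset.mem_singleton, Prod.mk.injEq] at h
        exact h.2.symm
    refine ⟨?_, hcc⟩
    refine sigma_unique hd5 hk hk' hj hj2 ht h0 h1 h2 h3 ?_
    intro v hv
    have hv' := hsub (Finset.mem_union_left _ hv)
    rcases Finset.mem_union.mp hv' with h | h
    · exact h
    · exact absurd (by rw [Finset.mem_singleton.mp h])
        (fst_ne_zero_of_mem_tauA hd0 hk (Finset.mem_of_mem_erase hv))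
  intro T hgc hsub
  rcases hgc with ⟨j', k', hGT, rfl⟩ | ⟨j', k', hGT, rfl⟩ <;>
  · obtain ⟨heq, hcc⟩ := key _ _ _ hGT.1 hsub
    rw [heq, hcc]

/-! ### The `x ↔ y` symmetry -/

def flipV (d : ℕ) : VtxA d → VtxA d := fun v => (v.1, !v.2)

lemma flipV_invol : Function.Involutive (flipV d) := fun v => by simp [flipV]

lemma flipV_inj : Function.Injective (flipV d) := (flipV_invol).injective

lemma mem_flip_iff {S : Finset (VtxA d)} {v : VtxA d} :
    v ∈ S.image (flipV d) ↔ flipV d v ∈ S := by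
  rw [Finset.mem_image]
  constructor
  · rintro ⟨u, hu, rfl⟩; rwa [flipV_invol u]
  · intro h; exact ⟨flipV d v, h, flipV_invol v⟩

lemma flip_flip (S : Finset (VtxA d)) : (S.image (flipV d)).image (flipV d) = S := by
  rw [Finset.image_image, Function.Involutive.comp_self flipV_invol, Finset.image_id]

lemma subset_flip {A B : Finset (VtxA d)} (h : A.image (flipV d) ⊆ B) :
    A ⊆ B.image (flipV d) := by
  intro v hv
  rw [mem_flip_iff]
  apply h
  rw [mem_flip_iff, flipV_invol]
  exact hv

lemma Tf_shift (hd0 : 0 < d) (hk : 1 ≤ k) (hk2 : k ≤ d) {j i : ℕ} (hj : j ≤ d)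
    (hi : 1 ≤ i) (hi2 : i ≤ d) :
    Tf d (If' d k j) i = (Tf d k i + (d - j)) % d := by
  have hu : Tf d k i < d := Tf_lt hd0 k i
  rcases Nat.eq_or_lt_of_le hj with heq | hjd
  · have hIf : If' d k j = k := by
      unfold If'
      rw [heq, Nat.add_mod_right, mod_small (show k - 1 < d by omega)]
      omega
    rw [hIf, heq, Nat.sub_self, Nat.add_zero, mod_small hu]

  · have hrot := Tf_If'_rot hd0 k (If' d k j) hu
    rw [If'_Tf hd0 k hi hi2] at hrot
    have h1 : If' d k j - 1 = (k - 1 + j) % d := by unfold If'; omega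
    rw [hrot, h1, mod_small (mod_lt' hd0 (k - 1 + j)), Nat.add_mod_mod]
    have hdm := Nat.div_add_mod (k - 1 + j) d
    have hBlt : (k - 1 + j) % d < d := mod_lt' hd0 _
    have hkey : k - 1 + (d - (k - 1 + j) % d) = (d - j) + d * ((k - 1 + j) / d) := by
      generalize hM : d * ((k - 1 + j) / d) = M at hdm ⊢
      omega
    rw [hkey, ← Nat.add_assoc, Nat.add_mul_mod_self_left]

lemma flip_cond (hd0 : 0 < d) {u j : ℕ} (hu : u < d) (hj : j ≤ d) :
    ((u + (d - j)) % d < d - j ↔ ¬ (u < j)) := by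
  rcases Nat.eq_or_lt_of_le hj with heq | hjd
  · rw [heq, Nat.sub_self, Nat.add_zero, mod_small hu]
    constructor
    · intro h; omega
    · intro h; exact absurd hu (by omega)
  · rcases Nat.lt_or_ge u j with h | h
    · rw [mod_small (by omega)]
      constructor
      · intro hh; omega
      · intro hh; exact absurd h hh
    · rw [mod_sub (by omega) (by omega)]
      constructor
      · intro _; omega
      · intro _; omega

lemma flip_tau (hd0 : 0 < d) (hk : 1 ≤ k) (hk2 : k ≤ d) {j : ℕ} (hj : j ≤ d) :
    (tauA d j k).image (flipV d) = tauA d (d - j) (If' d k j) := by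
  ext v
  rw [mem_flip_iff]
  constructor
  · intro hv
    obtain ⟨i, hi, hi2, hfv⟩ := mem_tauA_elim hd0 hk hv
    have hv' : v = ((i : ZMod (d+1)), !decide (Tf d k i < j)) := by
      have := congrArg (flipV d) hfv
      rw [flipV_invol] at this
      rw [this]; rfl
    rw [hv', mem_tauA_iff hd0 (If'_ge_one d k j) hi hi2,
      Tf_shift hd0 hk hk2 hj hi hi2, ← decide_not, decide_eq_decide]
    exact (flip_cond hd0 (Tf_lt hd0 k i) hj).symm
  · intro hv
    obtain ⟨i, hi, hi2, hfv⟩ := mem_tauA_elim hd0 (If'_ge_one d k j) hv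
    rw [hfv]
    show ((i : ZMod (d+1)), !decide (Tf d (If' d k j) i < d - j)) ∈ tauA d j k
    rw [mem_tauA_iff hd0 hk hi hi2, Tf_shift hd0 hk hk2 hj hi hi2,
      ← decide_not, decide_eq_decide, flip_cond hd0 (Tf_lt hd0 k i) hj]
    tauto

lemma G1_j_le (hd5 : 5 ≤ d) {j k : ℕ} (h : G1 d j k) : j ≤ d := by
  obtain ⟨_, _, hc⟩ := h
  by_cases hpar : d % 2 = 1
  · rw [if_pos hpar] at hc; omega
  · rw [if_neg hpar] at hc; omega

lemma G2_j_le (hd5 : 5 ≤ d) {j k : ℕ} (h : G2 d j k) : j ≤ d := by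
  obtain ⟨_, _, hc⟩ := h
  by_cases hpar : d % 2 = 1
  · rw [if_pos hpar] at hc; omega
  · rw [if_neg hpar] at hc; omega

lemma flip_G1 (hd5 : 5 ≤ d) {j k : ℕ} (h : G1 d j k) : G2 d (d - j) (If' d k j) := by
  have hd0 : 0 < d := by omega
  obtain ⟨hk1, hk2, hc⟩ := h
  refine ⟨If'_ge_one d k j, If'_le hd0 k j, ?_⟩
  by_cases hpar : d % 2 = 1
  · rw [if_pos hpar] at hc ⊢; omega
  · rw [if_neg hpar] at hc ⊢
    rcases hc with hc | ⟨rfl, hx1, hx2⟩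
    · left; omega
    · right
      have hIf : If' d k (d/2+1) = k + d/2 - d + 1 := by
        unfold If'
        rw [show k - 1 + (d/2+1) = k + d/2 by omega,
          mod_sub (by omega) (by omega)]
      rw [hIf]
      omega

lemma flip_G2 (hd5 : 5 ≤ d) {j k : ℕ} (h : G2 d j k) : G1 d (d - j) (If' d k j) := by
  have hd0 : 0 < d := by omega
  obtain ⟨hk1, hk2, hc⟩ := h
  refine ⟨If'_ge_one d k j, If'_le hd0 k j, ?_⟩
  by_cases hpar : d % 2 = 1
  · rw [if_pos hpar] at hc ⊢; omega
  · rw [if_neg hpar] at hc ⊢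
    rcases hc with hc | ⟨rfl, hx⟩
    · left; omega
    · right
      have hIf : If' d k (d/2-1) = k + d/2 - 1 := by
        unfold If'
        rw [show k - 1 + (d/2-1) = k + d/2 - 2 by omega,
          mod_small (by omega)]
        omega
      rw [hIf]
      omega

lemma gencone_flip (hd5 : 5 ≤ d) {T : Finset (VtxA d)} (h : GenCone d T) :
    GenCone d (T.image (flipV d)) := by
  have hd0 : 0 < d := by omega
  rcases h with ⟨j, k, hG, rfl⟩ | ⟨j, k, hG, rfl⟩
  · refine Or.inr ⟨d - j, If' d k j, flip_G1 hd5 hG, ?_⟩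
    rw [Finset.image_union, flip_tau hd0 hG.1 hG.2.1 (G1_j_le hd5 hG),
      Finset.image_singleton]
    rfl
  · refine Or.inl ⟨d - j, If' d k j, flip_G2 hd5 hG, ?_⟩
    rw [Finset.image_union, flip_tau hd0 hG.1 hG.2.1 (G2_j_le hd5 hG),
      Finset.image_singleton]
    rfl

lemma good_flip (hd5 : 5 ≤ d) {F : Finset (VtxA d)} (h : Good d F) :
    Good d (F.image (flipV d)) := by
  obtain ⟨F₀, hFF, hcard, ⟨T, hgc, hsub⟩, huniq⟩ := h
  refine ⟨F₀.image (flipV d), Finset.image_subset_image hFF,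
    by rw [Finset.card_image_of_injective _ flipV_inj]; exact hcard,
    ⟨T.image (flipV d), gencone_flip hd5 hgc, Finset.image_subset_image hsub⟩, ?_⟩
  intro T1 T2 h1 hs1 h2 hs2
  have e1 := huniq (T1.image (flipV d)) (T2.image (flipV d))
    (gencone_flip hd5 h1) (subset_flip hs1) (gencone_flip hd5 h2) (subset_flip hs2)
  have := congrArg (fun S => Finset.image (flipV d) S) e1
  simpa [flip_flip] using this

/-! ### Helpers for the coverage argument -/

lemma G1_of (hd5 : 5 ≤ d) {j k : ℕ} (hk : 1 ≤ k) (hk2 : k ≤ d) (hj : j ≤ d / 2) :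
    G1 d j k := by
  refine ⟨hk, hk2, ?_⟩
  by_cases hpar : d % 2 = 1
  · rw [if_pos hpar]; omega
  · rw [if_neg hpar]; left; omega

lemma Kpos (hd0 : 0 < d) {i t : ℕ} (hi : 1 ≤ i) (hi2 : i ≤ d) (ht : t < d) :
    Tf d (If' d i (d - t)) i = t := by
  have e1 : If' d i (d - t) - 1 = (i - 1 + (d - t)) % d := by unfold If'; omega
  have e2 : If' d (If' d i (d - t)) t = i := by
    calc If' d (If' d i (d - t)) t = ((If' d i (d - t) - 1) + t) % d + 1 := rfl
    _ = ((i - 1 + (d - t)) % d + t) % d + 1 := by rw [e1]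
    _ = ((i - 1 + (d - t)) + t) % d + 1 := by rw [Nat.mod_add_mod]
    _ = (i - 1 + d) % d + 1 := by rw [show i - 1 + (d - t) + t = i - 1 + d by omega]
    _ = (i - 1) % d + 1 := by rw [Nat.add_mod_right]
    _ = i := by rw [mod_small (by omega)]; omega
  have := congrArg (Tf d (If' d i (d - t))) e2
  rw [Tf_If' hd0 _ ht] at this
  exact this.symm

lemma Tf_antisym (hd0 : 0 < d) {i i' : ℕ} (hi : 1 ≤ i) (hi2 : i ≤ d) (hi' : 1 ≤ i')
    (hi2' : i' ≤ d) (hne : i ≠ i') : Tf d i i' + Tf d i' i = d := by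
  rw [Tf_eq hi hi2 hi', Tf_eq hi' hi2' hi]
  rcases Nat.lt_or_ge i i' with h | h
  · rw [mod_sub (by omega) (by omega), mod_small (by omega)]; omega
  · rw [mod_small (by omega), mod_sub (by omega) (by omega)]; omega

lemma val_ge_one {z : ZMod (d+1)} (hz : z ≠ 0) : 1 ≤ z.val := by
  rcases Nat.eq_zero_or_pos z.val with h | h
  · exact absurd ((ZMod.val_eq_zero _).mp h) hz
  · exact h

lemma val_le (z : ZMod (d+1)) : z.val ≤ d := by have := ZMod.val_lt z; omega

/-- Apply the punctured-facet construction (cone vertex `x₀`). -/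
lemma cone_case_apply (hd5 : 5 ≤ d) {j k t₀ : ℕ} (hk : 1 ≤ k) (hk2 : k ≤ d)
    (hj : 1 ≤ j) (hj2 : j ≤ d - 1) (ht : t₀ < d) (h0 : t₀ ≠ 0) (h1 : t₀ ≠ j - 1)
    (h2 : t₀ ≠ j) (h3 : t₀ ≠ d - 1) (hG1 : G1 d j k)
    {F : Finset (VtxA d)}
    (hcov : ∀ v ∈ F, v ≠ ((0 : ZMod (d+1)), false) →
      v.1 ≠ 0 ∧ Tf d k v.1.val ≠ t₀ ∧ (v.2 = true ↔ Tf d k v.1.val < j)) :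
    Good d F := by
  have hd0 : 0 < d := by omega
  apply good_of_sigma (c := false) hd5 hk hk2 hj hj2 ht h0 h1 h2 h3
    (Or.inl ⟨j, k, hG1, rfl⟩)
  intro v hv
  by_cases hvc : v = ((0 : ZMod (d+1)), false)
  · rw [hvc]; exact cone_mem_sigmaF
  · obtain ⟨hz, hnt, hiff⟩ := hcov v hv hvc
    have hi1 : 1 ≤ v.1.val := val_ge_one hz
    have hi2 : v.1.val ≤ d := val_le v.1
    have hmem := mem_sigmaF_of (j := j) (c := false) hd0 hk hi1 hi2 ht hnt
    have hdec : v.2 = decide (Tf d k v.1.val < j) := by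
      rcases Bool.eq_false_or_eq_true v.2 with hb | hb
      · rw [hb]
        exact (decide_eq_true (hiff.mp hb)).symm
      · rw [hb]
        refine (decide_eq_false fun hlt => ?_).symm
        have := hiff.mpr hlt
        rw [hb] at this
        exact Bool.false_ne_true this
    have hveq : v = (((v.1.val : ℕ) : ZMod (d+1)), v.2) := by rw [val_cast]
    rw [hveq, hdec]
    exact hmem

/-- Apply the full-facet construction (`j ≤ 1`). -/
lemma full_case_apply (hd5 : 5 ≤ d) {j k : ℕ} (hk : 1 ≤ k) (hk2 : k ≤ d) (hj : j ≤ 1)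
    {F : Finset (VtxA d)}
    (hcov : ∀ v ∈ F, v.1 ≠ 0 ∧ (v.2 = true ↔ Tf d k v.1.val < j)) : Good d F := by
  have hd0 : 0 < d := by omega
  apply good_of_full hd5 hk hk2 hj
  intro v hv
  obtain ⟨hz, hiff⟩ := hcov v hv
  have hi1 : 1 ≤ v.1.val := val_ge_one hz
  have hi2 : v.1.val ≤ d := val_le v.1
  have hdec : v.2 = decide (Tf d k v.1.val < j) := by
    rcases Bool.eq_false_or_eq_true v.2 with hb | hb
    · rw [hb]
      exact (decide_eq_true (hiff.mp hb)).symm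
    · rw [hb]
      refine (decide_eq_false fun hlt => ?_).symm
      have := hiff.mpr hlt
      rw [hb] at this
      exact Bool.false_ne_true this
  have hveq : v = (((v.1.val : ℕ) : ZMod (d+1)), v.2) := by rw [val_cast]
  rw [hveq, hdec]
  exact tau_mem_of hd0 hk hi1 hi2

/-! ### The main coverage lemma -/

lemma good_direct (hd5 : 5 ≤ d) {F : Finset (VtxA d)} (hcard : F.card ≤ 3)
    (hface : ∀ i : ZMod (d + 1), ¬ (((i, false) ∈ F) ∧ ((i, true) ∈ F)))
    (hy0 : ((0 : ZMod (d+1)), true) ∉ F)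
    (hP : ((0 : ZMod (d+1)), false) ∈ F ∨ (F.filter (fun v => v.2 = true)).card ≤ 1) :
    Good d F := by
  have hd0 : 0 < d := by omega
  by_cases hx0 : ((0 : ZMod (d+1)), false) ∈ F
  · -- the cone vertex x₀ belongs to F
    set F' := F.erase ((0 : ZMod (d+1)), false) with hF'def
    have hmemF' : ∀ v, v ∈ F → v ≠ ((0 : ZMod (d+1)), false) → v ∈ F' := by
      intro v hv hne; exact Finset.mem_erase.mpr ⟨hne, hv⟩
    have hbody : ∀ v ∈ F', v.1 ≠ 0 := by
      intro v hv h0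
      have hvF := Finset.mem_of_mem_erase hv
      have hvne := (Finset.mem_erase.mp hv).1
      have hveq : v = (v.1, v.2) := rfl
      rcases Bool.eq_false_or_eq_true v.2 with hb | hb
      · apply hy0; rw [hveq, h0, hb] at hvF; exact hvF
      · apply hvne; rw [hveq, h0, hb]
    have hcF' : F'.card ≤ 2 := by
      rw [hF'def, Finset.card_erase_of_mem hx0]; omega
    set Y := F'.filter (fun v => v.2 = true) with hYdef
    set X := F'.filter (fun v => v.2 = false) with hXdef
    have hXalt : F'.filter (fun v => ¬ (v.2 = true)) = X := by
      rw [hXdef]; apply Finset.filter_congr; intro v _; simp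
    have hsum : Y.card + X.card = F'.card := by
      have h := Finset.card_filter_add_card_filter_not
        (s := F') (p := fun v => v.2 = true)
      rw [hXalt] at h; exact h
    have hYX : ∀ v ∈ F', (v.2 = true → v ∈ Y) ∧ (v.2 = false → v ∈ X) := by
      intro v hv
      exact ⟨fun hb => Finset.mem_filter.mpr ⟨hv, hb⟩,
        fun hb => Finset.mem_filter.mpr ⟨hv, hb⟩⟩
    rcases (show Y.card = 0 ∨ Y.card = 1 ∨ Y.card = 2 by omega) with hY0 | hY1 | hY2
    · -- no y-vertices besides possibly the cone
      have hnoY : ∀ v ∈ F', v.2 = false := by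
        intro v hv
        rcases Bool.eq_false_or_eq_true v.2 with hb | hb
        · exfalso
          have := (hYX v hv).1 hb
          rw [Finset.card_eq_zero.mp hY0] at this
          exact absurd this (Finset.notMem_empty v)
        · exact hb
      rcases (show X.card = 0 ∨ X.card = 1 ∨ X.card = 2 by omega) with hX0 | hX1 | hX2
      · -- F = {x₀}
        refine cone_case_apply hd5 (k := 1) (j := 1) (t₀ := 3) (by omega) (by omega)
          (by omega) (by omega) (by omega) (by omega) (by omega) (by omega) (by omega)
          (G1_of hd5 (by omega) (by omega) (by omega)) ?_
        intro v hv hvc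
        exfalso
        have hvF' := hmemF' v hv hvc
        have : F' = ∅ := Finset.card_eq_zero.mp (by omega)
        rw [this] at hvF'
        exact absurd hvF' (Finset.notMem_empty v)
      · -- F = {x₀, x_a}
        obtain ⟨a, hXa⟩ := Finset.card_eq_one.mp hX1
        have haX : a ∈ X := by rw [hXa]; exact Finset.mem_singleton_self a
        have haF' : a ∈ F' := (Finset.mem_filter.mp haX).1
        have hz : a.1 ≠ 0 := hbody a haF'
        have hi1 : 1 ≤ a.1.val := val_ge_one hz
        have hi2 : a.1.val ≤ d := val_le a.1
        have hTk : Tf d (If' d a.1.val (d - 1)) a.1.val = 1 := Kpos hd0 hi1 hi2 (by omega)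
        refine cone_case_apply hd5 (k := If' d a.1.val (d - 1)) (j := 1) (t₀ := 3)
          (If'_ge_one d _ _) (If'_le hd0 _ _)
          (by omega) (by omega) (by omega) (by omega) (by omega) (by omega) (by omega)
          (G1_of hd5 (If'_ge_one d _ _) (If'_le hd0 _ _) (by omega)) ?_
        intro v hv hvc
        have hvF' := hmemF' v hv hvc
        have hvb := hnoY v hvF'
        have hva : v = a := by
          have := (hYX v hvF').2 hvb
          rw [hXa] at this
          exact Finset.mem_singleton.mp this
        subst hva
        refine ⟨hz, by omega, ?_⟩
        rw [hvb, hTk]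
        constructor
        · intro h; exact absurd h Bool.false_ne_true
        · intro h; omega
      · -- F = {x₀, x_a, x_b}
        obtain ⟨a, b, hab, hXab⟩ := Finset.card_eq_two.mp hX2
        have haX : a ∈ X := by rw [hXab]; exact Finset.mem_insert_self a _
        have hbX : b ∈ X := by
          rw [hXab]; exact Finset.mem_insert_of_mem (Finset.mem_singleton_self b)
        have haF' : a ∈ F' := (Finset.mem_filter.mp haX).1
        have hbF' : b ∈ F' := (Finset.mem_filter.mp hbX).1
        have ha2 : a.2 = false := (Finset.mem_filter.mp haX).2
        have hb2 : b.2 = false := (Finset.mem_filter.mp hbX).2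
        have hza : a.1 ≠ 0 := hbody a haF'
        have hzb : b.1 ≠ 0 := hbody b hbF'
        have hia1 : 1 ≤ a.1.val := val_ge_one hza
        have hia2 : a.1.val ≤ d := val_le a.1
        have hib1 : 1 ≤ b.1.val := val_ge_one hzb
        have hib2 : b.1.val ≤ d := val_le b.1
        have hfstne : a.1 ≠ b.1 := by
          intro h
          exact hab (Prod.ext_iff.mpr ⟨h, by rw [ha2, hb2]⟩)
        have hvalne : a.1.val ≠ b.1.val := by
          intro h
          apply hfstne
          rw [← val_cast (z := a.1), ← val_cast (z := b.1), h]
        set k₁ := If' d a.1.val (d - 1) with hk₁def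
        have hk₁1 : 1 ≤ k₁ := If'_ge_one d _ _
        have hk₁2 : k₁ ≤ d := If'_le hd0 _ _
        have hT1 : Tf d k₁ a.1.val = 1 := Kpos hd0 hia1 hia2 (by omega)
        set r := Tf d k₁ b.1.val with hrdef
        have hrd : r < d := Tf_lt hd0 _ _
        have hrne1 : r ≠ 1 := by
          intro h
          exact hvalne (Tf_inj hd0 k₁ hia1 hia2 hib1 hib2 (by omega))
        by_cases hr0 : r = 0
        · -- b is just "before" a; restart the block at b instead
          set k₂ := If' d b.1.val (d - 1) with hk₂def
          have hk₂1 : 1 ≤ k₂ := If'_ge_one d _ _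
          have hk₂2 : k₂ ≤ d := If'_le hd0 _ _
          have hT2 : Tf d k₂ b.1.val = 1 := Kpos hd0 hib1 hib2 (by omega)
          have hIa : If' d k₁ 1 = a.1.val := by
            have h := If'_Tf hd0 k₁ hia1 hia2
            rw [hT1] at h
            exact h
          have hIb : If' d k₁ 0 = b.1.val := by
            have h := If'_Tf hd0 k₁ hib1 hib2
            rw [← hrdef, hr0] at h
            exact h
          have ho : (k₁ - 1 + (d - (k₂ - 1) % d)) % d < d := mod_lt' hd0 _
          have h2 := Tf_If'_rot hd0 k₁ k₂ (show (0:ℕ) < d by omega)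
          rw [hIb, Nat.zero_add, mod_small ho] at h2
          have ho1 : (k₁ - 1 + (d - (k₂ - 1) % d)) % d = 1 := by rw [← h2, hT2]
          have h3 := Tf_If'_rot hd0 k₁ k₂ (show (1:ℕ) < d by omega)
          rw [hIa, ho1, mod_small (by omega : (1:ℕ) + 1 < d)] at h3
          refine cone_case_apply hd5 (k := k₂) (j := 1) (t₀ := 3) hk₂1 hk₂2
            (by omega) (by omega) (by omega) (by omega) (by omega) (by omega) (by omega)
            (G1_of hd5 hk₂1 hk₂2 (by omega)) ?_
          intro v hv hvc
          have hvF' := hmemF' v hv hvc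
          have hvb := hnoY v hvF'
          have hvX := (hYX v hvF').2 hvb
          rw [hXab] at hvX
          rcases Finset.mem_insert.mp hvX with hva | hva
          · subst hva
            refine ⟨hza, by omega, ?_⟩
            rw [hvb, h3]
            exact ⟨fun h => absurd h Bool.false_ne_true, fun h => by omega⟩
          · have hva := Finset.mem_singleton.mp hva
            subst hva
            refine ⟨hzb, by omega, ?_⟩
            rw [hvb, hT2]
            exact ⟨fun h => absurd h Bool.false_ne_true, fun h => by omega⟩
        · -- r ≥ 2
          have hr2 : 2 ≤ r := by omega
          have hts : ((if r = 3 then 2 else 3) = 2 ∧ r = 3) ∨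
              ((if r = 3 then 2 else 3) = 3 ∧ r ≠ 3) := by
            by_cases hr3 : r = 3
            · left; exact ⟨if_pos hr3, hr3⟩
            · right; exact ⟨if_neg hr3, hr3⟩
          refine cone_case_apply hd5 (k := k₁) (j := 1) (t₀ := if r = 3 then 2 else 3)
            hk₁1 hk₁2 (by omega)
            (by omega) (by rcases hts with ⟨h,_⟩|⟨h,_⟩ <;> omega)
            (by rcases hts with ⟨h,_⟩|⟨h,_⟩ <;> omega)
            (by rcases hts with ⟨h,_⟩|⟨h,_⟩ <;> omega)
            (by rcases hts with ⟨h,_⟩|⟨h,_⟩ <;> omega)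
            (by rcases hts with ⟨h,_⟩|⟨h,_⟩ <;> omega)
            (G1_of hd5 hk₁1 hk₁2 (by omega)) ?_
          intro v hv hvc
          have hvF' := hmemF' v hv hvc
          have hvb := hnoY v hvF'
          have hvX := (hYX v hvF').2 hvb
          rw [hXab] at hvX
          rcases Finset.mem_insert.mp hvX with hva | hva
          · subst hva
            refine ⟨hza, ?_, ?_⟩
            · rw [hT1]; rcases hts with ⟨h,h'⟩|⟨h,h'⟩ <;> omega
            · rw [hvb, hT1]
              exact ⟨fun h => absurd h Bool.false_ne_true, fun h => by omega⟩
          · have hva := Finset.mem_singleton.mp hva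
            subst hva
            refine ⟨hzb, ?_, ?_⟩
            · rw [← hrdef]; rcases hts with ⟨h,h'⟩|⟨h,h'⟩ <;> omega
            · rw [hvb, ← hrdef]
              exact ⟨fun h => absurd h Bool.false_ne_true, fun h => by omega⟩
    · -- one y-vertex besides the cone
      obtain ⟨a, hYa⟩ := Finset.card_eq_one.mp hY1
      have haY : a ∈ Y := by rw [hYa]; exact Finset.mem_singleton_self a
      have haF' : a ∈ Y := haY
      have haF'' : a ∈ F' := (Finset.mem_filter.mp haY).1
      have ha2 : a.2 = true := (Finset.mem_filter.mp haY).2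
      have hza : a.1 ≠ 0 := hbody a haF''
      have hia1 : 1 ≤ a.1.val := val_ge_one hza
      have hia2 : a.1.val ≤ d := val_le a.1
      have hTz : Tf d a.1.val a.1.val = 0 := Tf_self hd0 hia1 hia2
      have hcovY : ∀ v ∈ F', v.2 = true → v = a := by
        intro v hv hb
        have := (hYX v hv).1 hb
        rw [hYa] at this
        exact Finset.mem_singleton.mp this
      rcases (show X.card = 0 ∨ X.card = 1 by omega) with hX0 | hX1
      · refine cone_case_apply hd5 (k := a.1.val) (j := 1) (t₀ := 3) hia1 hia2
          (by omega) (by omega) (by omega) (by omega) (by omega) (by omega) (by omega)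
          (G1_of hd5 hia1 hia2 (by omega)) ?_
        intro v hv hvc
        have hvF' := hmemF' v hv hvc
        have hvb : v.2 = true := by
          rcases Bool.eq_false_or_eq_true v.2 with hb | hb
          · exact hb
          · exfalso
            have := (hYX v hvF').2 hb
            rw [Finset.card_eq_zero.mp hX0] at this
            exact absurd this (Finset.notMem_empty v)
        have hva := hcovY v hvF' hvb
        subst hva
        refine ⟨hza, by omega, ?_⟩
        rw [hvb, hTz]
        exact ⟨fun _ => by omega, fun _ => rfl⟩
      · obtain ⟨b, hXb⟩ := Finset.card_eq_one.mp hX1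
        have hbX : b ∈ X := by rw [hXb]; exact Finset.mem_singleton_self b
        have hbF' : b ∈ F' := (Finset.mem_filter.mp hbX).1
        have hb2 : b.2 = false := (Finset.mem_filter.mp hbX).2
        have hzb : b.1 ≠ 0 := hbody b hbF'
        have hib1 : 1 ≤ b.1.val := val_ge_one hzb
        have hib2 : b.1.val ≤ d := val_le b.1
        have hfstne : b.1 ≠ a.1 := by
          intro h
          apply hface a.1
          constructor
          · have : b = (a.1, false) := by rw [← h, ← hb2]
            rw [← this]; exact Finset.mem_of_mem_erase hbF'
          · have : a = (a.1, true) := by rw [← ha2]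
            rw [← this]; exact Finset.mem_of_mem_erase haF''
        have hvalne : b.1.val ≠ a.1.val := by
          intro h
          apply hfstne
          rw [← val_cast (z := b.1), ← val_cast (z := a.1), h]
        set r := Tf d a.1.val b.1.val with hrdef
        have hrd : r < d := Tf_lt hd0 _ _
        have hr1 : 1 ≤ r := by
          rcases Nat.eq_zero_or_pos r with h | h
          · exfalso
            exact hvalne (Tf_inj hd0 a.1.val hib1 hib2 hia1 hia2 (by rw [← hrdef, h, hTz]))
          · exact h
        have hts : ((if r = 3 then 2 else 3) = 2 ∧ r = 3) ∨
            ((if r = 3 then 2 else 3) = 3 ∧ r ≠ 3) := by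
          by_cases hr3 : r = 3
          · left; exact ⟨if_pos hr3, hr3⟩
          · right; exact ⟨if_neg hr3, hr3⟩
        refine cone_case_apply hd5 (k := a.1.val) (j := 1) (t₀ := if r = 3 then 2 else 3)
          hia1 hia2 (by omega)
          (by omega) (by rcases hts with ⟨h,_⟩|⟨h,_⟩ <;> omega)
          (by rcases hts with ⟨h,_⟩|⟨h,_⟩ <;> omega)
          (by rcases hts with ⟨h,_⟩|⟨h,_⟩ <;> omega)
          (by rcases hts with ⟨h,_⟩|⟨h,_⟩ <;> omega)
          (by rcases hts with ⟨h,_⟩|⟨h,_⟩ <;> omega)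
          (G1_of hd5 hia1 hia2 (by omega)) ?_
        intro v hv hvc
        have hvF' := hmemF' v hv hvc
        rcases Bool.eq_false_or_eq_true v.2 with hvb | hvb
        · have hva := hcovY v hvF' hvb
          subst hva
          refine ⟨hza, ?_, ?_⟩
          · rw [hTz]; rcases hts with ⟨h,_⟩|⟨h,_⟩ <;> omega
          · rw [hvb, hTz]
            exact ⟨fun _ => by omega, fun _ => rfl⟩
        · have hvX := (hYX v hvF').2 hvb
          rw [hXb] at hvX
          have hva := Finset.mem_singleton.mp hvX
          subst hva
          refine ⟨hzb, ?_, ?_⟩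
          · rw [← hrdef]; rcases hts with ⟨h,h'⟩|⟨h,h'⟩ <;> omega
          · rw [hvb, ← hrdef]
            exact ⟨fun h => absurd h Bool.false_ne_true, fun h => by omega⟩
    · -- two y-vertices besides the cone
      have hX0 : X.card = 0 := by omega
      have hnoX : ∀ v ∈ F', v.2 = true := by
        intro v hv
        rcases Bool.eq_false_or_eq_true v.2 with hb | hb
        · exact hb
        · exfalso
          have := (hYX v hv).2 hb
          rw [Finset.card_eq_zero.mp hX0] at this
          exact absurd this (Finset.notMem_empty v)
      obtain ⟨a, b, hab, hYab⟩ := Finset.card_eq_two.mp hY2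
      have haY : a ∈ Y := by rw [hYab]; exact Finset.mem_insert_self a _
      have hbY : b ∈ Y := by
        rw [hYab]; exact Finset.mem_insert_of_mem (Finset.mem_singleton_self b)
      have haF' : a ∈ F' := (Finset.mem_filter.mp haY).1
      have hbF' : b ∈ F' := (Finset.mem_filter.mp hbY).1
      have ha2 : a.2 = true := (Finset.mem_filter.mp haY).2
      have hb2 : b.2 = true := (Finset.mem_filter.mp hbY).2
      have hza : a.1 ≠ 0 := hbody a haF'
      have hzb : b.1 ≠ 0 := hbody b hbF'
      have hia1 : 1 ≤ a.1.val := val_ge_one hza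
      have hia2 : a.1.val ≤ d := val_le a.1
      have hib1 : 1 ≤ b.1.val := val_ge_one hzb
      have hib2 : b.1.val ≤ d := val_le b.1
      have hfstne : a.1 ≠ b.1 := by
        intro h
        exact hab (Prod.ext_iff.mpr ⟨h, by rw [ha2, hb2]⟩)
      have hvalne : a.1.val ≠ b.1.val := by
        intro h
        apply hfstne
        rw [← val_cast (z := a.1), ← val_cast (z := b.1), h]
      set r₁ := Tf d a.1.val b.1.val with hr₁def
      have hr₁d : r₁ < d := Tf_lt hd0 _ _
      have hr₁1 : 1 ≤ r₁ := by
        rcases Nat.eq_zero_or_pos r₁ with h | h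
        · exfalso
          exact hvalne (Tf_inj hd0 a.1.val hia1 hia2 hib1 hib2
            (by rw [Tf_self hd0 hia1 hia2]; omega))
        · exact h
      have hSD : r₁ + Tf d b.1.val a.1.val = d :=
        Tf_antisym hd0 hia1 hia2 hib1 hib2 hvalne
      obtain ⟨k, r, hk1, hk2, hr1, hr2, hG1, hpos⟩ :
          ∃ k r, 1 ≤ k ∧ k ≤ d ∧ 1 ≤ r ∧ r ≤ d / 2 ∧ G1 d (r+1) k ∧
            ((Tf d k a.1.val = 0 ∧ Tf d k b.1.val = r) ∨
             (Tf d k b.1.val = 0 ∧ Tf d k a.1.val = r)) := by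
        by_cases hA : r₁ + 1 ≤ d / 2
        · exact ⟨a.1.val, r₁, hia1, hia2, by omega, by omega,
            G1_of hd5 hia1 hia2 (by omega),
            Or.inl ⟨Tf_self hd0 hia1 hia2, rfl⟩⟩
        by_cases hB : (d - r₁) + 1 ≤ d / 2
        · exact ⟨b.1.val, d - r₁, hib1, hib2, by omega, by omega,
            G1_of hd5 hib1 hib2 (by omega),
            Or.inr ⟨Tf_self hd0 hib1 hib2, by omega⟩⟩
        by_cases hpar : d % 2 = 1
        · -- odd: any k works with j = d/2 + 1
          by_cases hr₁e : r₁ = d / 2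
          · exact ⟨a.1.val, r₁, hia1, hia2, by omega, by omega,
              ⟨hia1, hia2, by rw [if_pos hpar]; omega⟩,
              Or.inl ⟨Tf_self hd0 hia1 hia2, rfl⟩⟩
          · have : r₁ = d / 2 + 1 := by omega
            exact ⟨b.1.val, d - r₁, hib1, hib2, by omega, by omega,
              ⟨hib1, hib2, by rw [if_pos hpar]; omega⟩,
              Or.inr ⟨Tf_self hd0 hib1 hib2, by omega⟩⟩
        · -- even: r₁ = d/2, choose the start vertex in [d/2, d-1]
          have hr₁e : r₁ = d / 2 := by omega
          have hdiff : b.1.val = a.1.val + d / 2 ∨ a.1.val = b.1.val + d / 2 := by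
            have he := Tf_eq hia1 hia2 hib1
            rw [← hr₁def] at he
            rcases Nat.lt_or_ge b.1.val a.1.val with h | h
            · right
              rw [mod_small (by omega)] at he
              omega
            · left
              rw [mod_sub (by omega) (by omega)] at he
              omega
          by_cases hloc : d / 2 ≤ a.1.val ∧ a.1.val ≤ d - 1
          · exact ⟨a.1.val, d / 2, hia1, hia2, by omega, by omega,
              ⟨hia1, hia2, by rw [if_neg hpar]; right; exact ⟨rfl, hloc.1, hloc.2⟩⟩,
              Or.inl ⟨Tf_self hd0 hia1 hia2, by omega⟩⟩
          · have hlocb : d / 2 ≤ b.1.val ∧ b.1.val ≤ d - 1 := by omega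
            exact ⟨b.1.val, d / 2, hib1, hib2, by omega, by omega,
              ⟨hib1, hib2, by rw [if_neg hpar]; right; exact ⟨rfl, hlocb.1, hlocb.2⟩⟩,
              Or.inr ⟨Tf_self hd0 hib1 hib2, by omega⟩⟩
      obtain ⟨hTa, hTb⟩ : (Tf d k a.1.val = 0 ∨ Tf d k a.1.val = r) ∧
          (Tf d k b.1.val = 0 ∨ Tf d k b.1.val = r) := by
        rcases hpos with ⟨h1, h2⟩ | ⟨h1, h2⟩
        · exact ⟨Or.inl h1, Or.inr h2⟩
        · exact ⟨Or.inr h2, Or.inl h1⟩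
      have hts : ((if r = 1 then 3 else 1) = 3 ∧ r = 1) ∨
          ((if r = 1 then 3 else 1) = 1 ∧ 2 ≤ r) := by
        by_cases hre : r = 1
        · left; exact ⟨if_pos hre, hre⟩
        · right; exact ⟨if_neg hre, by omega⟩
      refine cone_case_apply hd5 (k := k) (j := r + 1) (t₀ := if r = 1 then 3 else 1)
        hk1 hk2 (by omega) (by omega)
        (by rcases hts with ⟨h,h'⟩|⟨h,h'⟩ <;> omega)
        (by rcases hts with ⟨h,h'⟩|⟨h,h'⟩ <;> omega)
        (by rcases hts with ⟨h,h'⟩|⟨h,h'⟩ <;> omega)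
        (by rcases hts with ⟨h,h'⟩|⟨h,h'⟩ <;> omega)
        (by rcases hts with ⟨h,h'⟩|⟨h,h'⟩ <;> omega)
        hG1 ?_
      intro v hv hvc
      have hvF' := hmemF' v hv hvc
      have hvb := hnoX v hvF'
      have hvY := (hYX v hvF').1 hvb
      rw [hYab] at hvY
      rcases Finset.mem_insert.mp hvY with hva | hva
      · subst hva
        refine ⟨hza, ?_, ?_⟩
        · rcases hts with ⟨h,h'⟩|⟨h,h'⟩ <;> rcases hTa with h2 | h2 <;> omega
        · rw [hvb]
          exact ⟨fun _ => by rcases hTa with h2 | h2 <;> omega, fun _ => rfl⟩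
      · have hva := Finset.mem_singleton.mp hva
        subst hva
        refine ⟨hzb, ?_, ?_⟩
        · rcases hts with ⟨h,h'⟩|⟨h,h'⟩ <;> rcases hTb with h2 | h2 <;> omega
        · rw [hvb]
          exact ⟨fun _ => by rcases hTb with h2 | h2 <;> omega, fun _ => rfl⟩
  · -- no cone vertex in F at all
    have hP' : (F.filter (fun v => v.2 = true)).card ≤ 1 := by
      rcases hP with h | h
      · exact absurd h hx0
      · exact h
    have hbody : ∀ v ∈ F, v.1 ≠ 0 := by
      intro v hv h0
      have hveq : v = (v.1, v.2) := rfl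
      rcases Bool.eq_false_or_eq_true v.2 with hb | hb
      · apply hy0; rw [hveq, h0, hb] at hv; exact hv
      · apply hx0; rw [hveq, h0, hb] at hv; exact hv
    set Y := F.filter (fun v => v.2 = true) with hYdef
    rcases (show Y.card = 0 ∨ Y.card = 1 by omega) with hY0 | hY1
    · refine full_case_apply hd5 (k := 1) (j := 0) (by omega) (by omega) (by omega) ?_
      intro v hv
      refine ⟨hbody v hv, ?_⟩
      constructor
      · intro hb
        exfalso
        have : v ∈ Y := Finset.mem_filter.mpr ⟨hv, hb⟩
        rw [Finset.card_eq_zero.mp hY0] at this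
        exact absurd this (Finset.notMem_empty v)
      · intro h; omega
    · obtain ⟨a, hYa⟩ := Finset.card_eq_one.mp hY1
      have haY : a ∈ Y := by rw [hYa]; exact Finset.mem_singleton_self a
      have haF : a ∈ F := (Finset.mem_filter.mp haY).1
      have ha2 : a.2 = true := (Finset.mem_filter.mp haY).2
      have hza : a.1 ≠ 0 := hbody a haF
      have hia1 : 1 ≤ a.1.val := val_ge_one hza
      have hia2 : a.1.val ≤ d := val_le a.1
      have hTz : Tf d a.1.val a.1.val = 0 := Tf_self hd0 hia1 hia2
      refine full_case_apply hd5 (k := a.1.val) (j := 1) hia1 hia2 (by omega) ?_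
      intro v hv
      refine ⟨hbody v hv, ?_⟩
      rcases Bool.eq_false_or_eq_true v.2 with hvb | hvb
      · have hva : v = a := by
          have : v ∈ Y := Finset.mem_filter.mpr ⟨hv, hvb⟩
          rw [hYa] at this
          exact Finset.mem_singleton.mp this
        subst hva
        rw [hvb, hTz]
        exact ⟨fun _ => by omega, fun _ => rfl⟩
      · have hvne : v.1 ≠ a.1 := by
          intro h
          apply hface a.1
          constructor
          · have : v = (a.1, false) := by rw [← h, ← hvb]
            rw [← this]; exact hv
          · have : a = (a.1, true) := by rw [← ha2]
            rw [← this]; exact haF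
        have hvvalne : v.1.val ≠ a.1.val := by
          intro h
          apply hvne
          rw [← val_cast (z := v.1), ← val_cast (z := a.1), h]
        have hTvne : Tf d a.1.val v.1.val ≠ 0 := by
          intro h
          exact hvvalne (Tf_inj hd0 a.1.val (val_ge_one (hbody v hv)) (val_le v.1)
            hia1 hia2 (by rw [h, hTz]))
        rw [hvb]
        exact ⟨fun h => absurd h Bool.false_ne_true, fun h => by omega⟩

/-- For every `d ≥ 5`, the boundary complex `∂(D_1 ∪ D_2)` contains the
`2`-skeleton of `∂C_{d+1}^*`: every subset of `V_{d+1}` of cardinality at most `3` containing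
no antipodal pair `{x_k, y_k}` is a face of `∂(D_1 ∪ D_2)`. -/
theorem statement12 (d : ℕ) (hd : 5 ≤ d) (F : Finset (VtxA d))
    (hcard : F.card ≤ 3)
    (hface : ∀ i : ZMod (d + 1), ¬ (((i, false) ∈ F) ∧ ((i, true) ∈ F))) :
    F ∈ BD d := by
  apply good_mem_BD hd
  by_cases h1 : ((0 : ZMod (d+1)), true) ∈ F
  · have hx0F : ((0 : ZMod (d+1)), false) ∉ F := fun h => hface 0 ⟨h, h1⟩
    have hg : Good d (F.image (flipV d)) := by
      apply good_direct hd
      · exact Finset.card_image_le.trans hcard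
      · rintro i ⟨hA, hB⟩
        rw [mem_flip_iff] at hA hB
        simp only [flipV, Bool.not_false, Bool.not_true] at hA hB
        exact hface i ⟨hB, hA⟩
      · intro h
        rw [mem_flip_iff] at h
        simp only [flipV, Bool.not_true] at h
        exact hx0F h
      · left
        rw [mem_flip_iff]
        simp only [flipV, Bool.not_false]
        exact h1
    have := good_flip hd hg
    rwa [flip_flip] at this
  · by_cases h2 : ((0 : ZMod (d+1)), false) ∈ F
    · exact good_direct hd hcard hface h1 (Or.inl h2)
    · by_cases h3 : (F.filter (fun v => v.2 = true)).card ≤ 1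
      · exact good_direct hd hcard hface h1 (Or.inr h3)
      · have hg : Good d (F.image (flipV d)) := by
          apply good_direct hd
          · exact Finset.card_image_le.trans hcard
          · rintro i ⟨hA, hB⟩
            rw [mem_flip_iff] at hA hB
            simp only [flipV, Bool.not_false, Bool.not_true] at hA hB
            exact hface i ⟨hB, hA⟩
          · intro h
            rw [mem_flip_iff] at h
            simp only [flipV, Bool.not_true] at h
            exact h2 h
          · right
            have himg : (F.image (flipV d)).filter (fun v => v.2 = true)
                = (F.filter (fun v => v.2 = false)).image (flipV d) := by
              rw [Finset.filter_image]
              congr 1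
              apply Finset.filter_congr
              intro v _
              simp [flipV]
            rw [himg, Finset.card_image_of_injective _ flipV_inj]
            have hs := Finset.card_filter_add_card_filter_not
              (s := F) (p := fun v => v.2 = true)
            have halt : F.filter (fun v => ¬ (v.2 = true))
                = F.filter (fun v => v.2 = false) := by
              apply Finset.filter_congr; intro v _; simp
            rw [halt] at hs
            omega
        have := good_flip hd hg
        rwa [flip_flip] at this

end SpherePaper
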